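/- Define matrices D_−^{(n)} of size 2^n-by-2^n over ℝ by the recurrence: D_−^{(0)} = [0] (the 1-by-1 zero matrix), and D_−^{(n+1)} = (1/2)·[[D_−^{(n)}, I],[0, D_−^{(n)}]] in 2-by-2 block form (upper-left and lower-right blocks D_−^{(n)}, upper-right block the 2^n-by-2^n identity, lower-left block zero, indices in the first half of Fin 2^{n+1} corresponding to the first block row/column). Then for every n ≥ 0, every 0 ≤ k < 2^n, and every x ∈ (0,1], Σ_{j=1}^∞ 2^{−j}·H_{n,k}((x + 2^{−j})·(1 − ε_j(x))) + ∫_0^x H_{n,k}(t) dt = Σ_{l=0}^{2^n−1} (D_−^{(n)})_{l,k} · H_{n,l}(x). In particular P_− = C_− + L maps each Haar scale subspace W_n = span{H_{n,l} : 0 ≤ l < 2^n} into itself, with matrix D_−^{(n)} in the basis (H_{n,l}). -/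

import Mathlib

open MeasureTheory Set Matrix

noncomputable section

/-- The `k`-th binary digit of `x ∈ (0,1]`: `ε_k(x) = (⌈2^k x⌉ − 1) mod 2`. -/
def eps (k : ℕ) (x : ℝ) : ℤ := (⌈(2 : ℝ) ^ k * x⌉ - 1) % 2

/-- Identification `Fin (2^n) ⊕ Fin (2^n) ≃ Fin (2^(n+1))` (first summand first). -/
def blockEquiv (n : ℕ) : Fin (2 ^ n) ⊕ Fin (2 ^ n) ≃ Fin (2 ^ (n + 1)) :=
  finSumFinEquiv.trans (finCongr (by rw [pow_succ]; omega))

/-- `D_−^{(0)} = [0]`, `D_−^{(n+1)} = (1/2)·[[D_−^{(n)}, I],[0, D_−^{(n)}]]`. -/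
def Dminus : (n : ℕ) → Matrix (Fin (2 ^ n)) (Fin (2 ^ n)) ℝ
  | 0 => 0
  | n + 1 => Matrix.reindex (blockEquiv n) (blockEquiv n)
      ((1 / 2 : ℝ) • Matrix.fromBlocks (Dminus n) 1 0 (Dminus n))

/-- The mother Haar function `H = χ_{(0,1/2]} − χ_{(1/2,1]}`. -/
def HaarH (x : ℝ) : ℝ :=
  Set.indicator (Set.Ioc 0 (1 / 2)) 1 x - Set.indicator (Set.Ioc (1 / 2) 1) 1 x

/-- `H_{n,k}(x) = 2^{n/2} H(2^n x − k)`. -/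
def HaarNK (n k : ℕ) (x : ℝ) : ℝ := Real.sqrt 2 ^ n * HaarH ((2 : ℝ) ^ n * x - k)

/-!
For `g` supported in `(0,1]`, the operator `P_−` intertwines the two halves of the dyadic
refinement: `P_−[g(2·)](x) = P_−[g](2x)/2` and `P_−[g(2·-1)](x) = g(2x)/2 + P_−[g](2x-1)/2`,
while `P_−[g]` vanishes on `(-∞,0]` and equals `∫ g` on `[1,∞)`. As `H_{n+1,k}` and
`H_{n+1,2^n+k}` are `√2 H_{n,k}(2·)` and `√2 H_{n,k}(2·-1)`, this gives the block recursion
of `D_−^{(n)}` by induction on `n`. The base case `P_−[H] = 0` reduces to `P_−[χ] = 1` for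
`χ = χ_{(0,1]} = χ(2·) + χ(2·-1)`: by the same identities `P_−[χ] - 1` is bounded on `(0,1]`
and halves along the doubling map `x ↦ 2x mod 1`, so it vanishes.
-/

open Function

theorem two_zpow_neg_succ (j : ℕ) : (2 : ℝ) ^ (-((j : ℤ) + 1)) = (2 ^ (j + 1))⁻¹ := by
  rw [← Nat.cast_succ, _root_.zpow_neg, zpow_natCast]

theorem eps_eq_zero_or_one (k : ℕ) (x : ℝ) : eps k x = 0 ∨ eps k x = 1 := by
  unfold eps; omega

theorem eps_succ (j : ℕ) (x : ℝ) : eps (j + 1) x = eps j (2 * x) := by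
  rw [eps, eps, pow_succ, mul_assoc]

theorem eps_succ_sub_one (j : ℕ) (y : ℝ) : eps (j + 1) (y - 1) = eps (j + 1) y := by
  have h : (2 : ℝ) ^ (j + 1) * (y - 1) = 2 ^ (j + 1) * y - ((2 ^ (j + 1) : ℤ) : ℝ) := by
    push_cast; ring
  have heven : (2 : ℤ) ^ (j + 1) % 2 = 0 := by rw [pow_succ]; omega
  rw [eps, eps, h, Int.ceil_sub_intCast]
  omega

theorem eps_one_of_le_half {x : ℝ} (h0 : 0 < x) (h : x ≤ 1 / 2) : eps 1 x = 0 := by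
  have : ⌈(2 : ℝ) ^ 1 * x⌉ = 1 := by
    rw [Int.ceil_eq_iff]; constructor <;> norm_num <;> linarith
  rw [eps, this]; rfl

theorem add_le_ceil_of_eps_eq_zero {j : ℕ} {y : ℝ} (h : eps (j + 1) y = 0) :
    y + (2 ^ (j + 1))⁻¹ ≤ ⌈y⌉ := by
  unfold eps at h
  set c := ⌈(2 : ℝ) ^ (j + 1) * y⌉
  have hpos : (0 : ℝ) < 2 ^ (j + 1) := by positivity
  have hc : c ≤ 2 ^ (j + 1) * ⌈y⌉ := Int.ceil_le.mpr (by
    push_cast; exact mul_le_mul_of_nonneg_left (Int.le_ceil y) hpos.le)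
  -- `c` is odd and `2 ^ (j + 1) * ⌈y⌉` is even
  have hc1 : c + 1 ≤ 2 ^ (j + 1) * ⌈y⌉ := by
    have : 2 ^ (j + 1) * ⌈y⌉ = 2 * (2 ^ j * ⌈y⌉) := by ring
    omega
  have hc1' : (c : ℝ) + 1 ≤ 2 ^ (j + 1) * ⌈y⌉ := by exact_mod_cast hc1
  have hyc : 2 ^ (j + 1) * y ≤ (c : ℝ) := Int.le_ceil _
  rw [← mul_le_mul_iff_of_pos_left hpos, mul_add, mul_inv_cancel₀ hpos.ne']
  linarith

theorem apply_eq_zero_of_nonpos {g : ℝ → ℝ} (hg : support g ⊆ Ioc 0 1) {y : ℝ} (hy : y ≤ 0) :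
    g y = 0 :=
  Function.support_subset_iff'.mp hg y fun h => (h.1.trans_le hy).false

theorem apply_eq_zero_of_one_lt {g : ℝ → ℝ} (hg : support g ⊆ Ioc 0 1) {y : ℝ} (hy : 1 < y) :
    g y = 0 :=
  Function.support_subset_iff'.mp hg y fun h => (h.2.trans_lt hy).false

def cminusTerm (f : ℝ → ℝ) (x : ℝ) (j : ℕ) : ℝ :=
  (2 ^ (j + 1))⁻¹ * f ((x + (2 ^ (j + 1))⁻¹) * (1 - (eps (j + 1) x : ℝ)))

def Cminus (f : ℝ → ℝ) (x : ℝ) : ℝ := ∑' j, cminusTerm f x j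

def Pminus (f : ℝ → ℝ) (x : ℝ) : ℝ := Cminus f x + ∫ t in (0 : ℝ)..x, f t

section cminusTerm

variable {f g : ℝ → ℝ} {x : ℝ} {j : ℕ}

theorem cminusTerm_of_eps_eq_zero (h : eps (j + 1) x = 0) :
    cminusTerm f x j = (2 ^ (j + 1))⁻¹ * f (x + (2 ^ (j + 1))⁻¹) := by
  simp [cminusTerm, h]

theorem cminusTerm_of_eps_eq_one (h : eps (j + 1) x = 1) :
    cminusTerm f x j = (2 ^ (j + 1))⁻¹ * f 0 := by
  simp [cminusTerm, h]

theorem cminusTerm_eq_zero_of_one_le (hg : support g ⊆ Ioc 0 1) (hx : 1 ≤ x) :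
    cminusTerm g x j = 0 := by
  rcases eps_eq_zero_or_one (j + 1) x with h | h
  · have hx' : 1 < x + (2 ^ (j + 1))⁻¹ := lt_add_of_le_of_pos hx (by positivity)
    rw [cminusTerm_of_eps_eq_zero h, apply_eq_zero_of_one_lt hg hx', mul_zero]
  · rw [cminusTerm_of_eps_eq_one h, apply_eq_zero_of_nonpos hg le_rfl, mul_zero]

theorem cminusTerm_eq_zero_of_nonpos (hg : support g ⊆ Ioc 0 1) (hx : x ≤ 0) :
    cminusTerm g x j = 0 := by
  rcases eps_eq_zero_or_one (j + 1) x with h | h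
  · have hceil : (⌈x⌉ : ℝ) ≤ 0 := by exact_mod_cast Int.ceil_le.mpr (by simpa using hx)
    rw [cminusTerm_of_eps_eq_zero h,
      apply_eq_zero_of_nonpos hg ((add_le_ceil_of_eps_eq_zero h).trans hceil), mul_zero]
  · rw [cminusTerm_of_eps_eq_one h, apply_eq_zero_of_nonpos hg le_rfl, mul_zero]

theorem cminusTerm_comp_two_mul_zero (hg : support g ⊆ Ioc 0 1) (hx : 0 < x) :
    cminusTerm (fun t => g (2 * t)) x 0 = 0 := by
  rcases eps_eq_zero_or_one 1 x with h | h
  · rw [cminusTerm_of_eps_eq_zero h, apply_eq_zero_of_one_lt hg (by linarith), mul_zero]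
  · rw [cminusTerm_of_eps_eq_one h, mul_zero, apply_eq_zero_of_nonpos hg le_rfl, mul_zero]

theorem cminusTerm_comp_two_mul_succ :
    cminusTerm (fun t => g (2 * t)) x (j + 1) = cminusTerm g (2 * x) j / 2 := by
  simp only [cminusTerm, eps_succ (j + 1) x]
  rw [show ∀ e : ℝ, 2 * ((x + (2 ^ (j + 1 + 1))⁻¹) * (1 - e)) = (2 * x + (2 ^ (j + 1))⁻¹) * (1 - e)
    from fun e => by ring]
  ring

theorem cminusTerm_comp_two_mul_sub_one_zero (hg : support g ⊆ Ioc 0 1) (hx : 0 < x) :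
    cminusTerm (fun t => g (2 * t - 1)) x 0 = g (2 * x) / 2 := by
  rcases eps_eq_zero_or_one 1 x with h | h
  · rw [cminusTerm_of_eps_eq_zero h]; ring_nf
  · have hx' : 1 / 2 < x := by
      by_contra! hle
      simp [eps_one_of_le_half hx hle] at h
    rw [cminusTerm_of_eps_eq_one h, apply_eq_zero_of_one_lt hg (show 1 < 2 * x by linarith),
      apply_eq_zero_of_nonpos hg (show 2 * 0 - 1 ≤ (0 : ℝ) by norm_num)]
    ring

theorem cminusTerm_comp_two_mul_sub_one_succ (hg : support g ⊆ Ioc 0 1) :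
    cminusTerm (fun t => g (2 * t - 1)) x (j + 1) = cminusTerm g (2 * x - 1) j / 2 := by
  have he : eps (j + 1 + 1) x = eps (j + 1) (2 * x - 1) := by
    rw [eps_succ, eps_succ_sub_one]
  rcases eps_eq_zero_or_one (j + 1) (2 * x - 1) with h | h
  · rw [cminusTerm_of_eps_eq_zero (he.trans h), cminusTerm_of_eps_eq_zero h,
      show 2 * (x + (2 ^ (j + 1 + 1))⁻¹) - 1 = 2 * x - 1 + (2 ^ (j + 1))⁻¹ by ring]
    ring
  · rw [cminusTerm_of_eps_eq_one (he.trans h), cminusTerm_of_eps_eq_one h,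
      apply_eq_zero_of_nonpos hg (by norm_num), apply_eq_zero_of_nonpos hg le_rfl]
    ring

theorem hasSum_mul_inv_two_pow_succ (M : ℝ) : HasSum (fun j : ℕ => M * (2 ^ (j + 1))⁻¹) M := by
  convert hasSum_geometric_two' M using 2 with j
  ring

theorem norm_cminusTerm_le {M : ℝ} (hf : ∀ y, |f y| ≤ M) (x : ℝ) (j : ℕ) :
    ‖cminusTerm f x j‖ ≤ M * (2 ^ (j + 1))⁻¹ := by
  rw [cminusTerm, Real.norm_eq_abs, abs_mul, abs_of_pos (by positivity), mul_comm]
  exact mul_le_mul_of_nonneg_right (hf _) (by positivity)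

theorem summable_cminusTerm {M : ℝ} (hf : ∀ y, |f y| ≤ M) (x : ℝ) :
    Summable (cminusTerm f x) :=
  (hasSum_mul_inv_two_pow_succ M).summable.of_norm_bounded (norm_cminusTerm_le hf x)

end cminusTerm

section Cminus

variable {f g : ℝ → ℝ} {x : ℝ}

theorem abs_Cminus_le {M : ℝ} (hf : ∀ y, |f y| ≤ M) : |Cminus f x| ≤ M :=
  tsum_of_norm_bounded (hasSum_mul_inv_two_pow_succ M) (norm_cminusTerm_le hf x)

theorem Cminus_eq_zero_of_one_le (hg : support g ⊆ Ioc 0 1) (hx : 1 ≤ x) : Cminus g x = 0 := by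
  simp [Cminus, cminusTerm_eq_zero_of_one_le hg hx]

theorem Cminus_eq_zero_of_nonpos (hg : support g ⊆ Ioc 0 1) (hx : x ≤ 0) : Cminus g x = 0 := by
  simp [Cminus, cminusTerm_eq_zero_of_nonpos hg hx]

theorem Cminus_comp_two_mul (hg : support g ⊆ Ioc 0 1) (hx : 0 < x) :
    Cminus (fun t => g (2 * t)) x = Cminus g (2 * x) / 2 := by
  have hsupp : support (cminusTerm (fun t => g (2 * t)) x) ⊆ range Nat.succ := by
    rintro (_ | j) hj
    · exact absurd (cminusTerm_comp_two_mul_zero hg hx) hj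
    · exact ⟨j, rfl⟩
  rw [Cminus, ← Nat.succ_injective.tsum_eq hsupp, Cminus, ← tsum_div_const]
  exact tsum_congr fun j => cminusTerm_comp_two_mul_succ

theorem Cminus_comp_two_mul_sub_one {M : ℝ} (hg : support g ⊆ Ioc 0 1) (hgb : ∀ y, |g y| ≤ M)
    (hx : 0 < x) :
    Cminus (fun t => g (2 * t - 1)) x = g (2 * x) / 2 + Cminus g (2 * x - 1) / 2 := by
  rw [Cminus, (summable_cminusTerm (fun y => hgb (2 * y - 1)) x).tsum_eq_zero_add,
    cminusTerm_comp_two_mul_sub_one_zero hg hx, Cminus, ← tsum_div_const]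
  congr 1
  exact tsum_congr fun j => cminusTerm_comp_two_mul_sub_one_succ hg

end Cminus

section Integral

variable {g : ℝ → ℝ}

theorem integral_comp_two_mul (x : ℝ) :
    ∫ t in (0 : ℝ)..x, g (2 * t) = (∫ t in (0 : ℝ)..2 * x, g t) / 2 := by
  rw [intervalIntegral.integral_comp_mul_left g two_ne_zero, mul_zero, smul_eq_mul,
    inv_mul_eq_div]

theorem integral_eq_zero_of_nonpos (hg : support g ⊆ Ioc 0 1) {a b : ℝ} (ha : a ≤ 0) (hb : b ≤ 0) :
    ∫ t in a..b, g t = 0 := by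
  rw [intervalIntegral.integral_congr (g := fun _ => 0) fun t ht =>
      apply_eq_zero_of_nonpos hg (ht.2.trans (max_le ha hb)),
    intervalIntegral.integral_zero]

theorem integral_eq_integral_of_one_le (hg : support g ⊆ Ioc 0 1) {y : ℝ} (hy : 1 ≤ y) :
    ∫ t in (0 : ℝ)..y, g t = ∫ t, g t := by
  rw [intervalIntegral.integral_of_le (by linarith)]
  refine setIntegral_eq_integral_of_forall_compl_eq_zero fun t ht => ?_
  exact Function.support_subset_iff'.mp hg t fun h => ht ⟨h.1, h.2.trans hy⟩

theorem integral_comp_two_mul_sub_one (hg : support g ⊆ Ioc 0 1) (hgi : Integrable g) (x : ℝ) :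
    ∫ t in (0 : ℝ)..x, g (2 * t - 1) = (∫ t in (0 : ℝ)..2 * x - 1, g t) / 2 := by
  rw [intervalIntegral.integral_comp_mul_sub g two_ne_zero, smul_eq_mul, inv_mul_eq_div,
    ← intervalIntegral.integral_add_adjacent_intervals (b := 0) hgi.intervalIntegrable
      hgi.intervalIntegrable, integral_eq_zero_of_nonpos hg (by norm_num) le_rfl, zero_add]

end Integral

section Pminus

variable {f g : ℝ → ℝ} {x : ℝ}

theorem Pminus_const_mul (c : ℝ) :
    Pminus (fun t => c * f t) x = c * Pminus f x := by
  have hC : Cminus (fun t => c * f t) x = c * Cminus f x := by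
    rw [Cminus, Cminus, ← tsum_mul_left]
    exact tsum_congr fun j => by simp only [cminusTerm]; ring
  rw [Pminus, Pminus, hC, intervalIntegral.integral_const_mul, mul_add]

theorem Pminus_add {M N : ℝ} (hfb : ∀ y, |f y| ≤ M) (hgb : ∀ y, |g y| ≤ N) (hfi : Integrable f)
    (hgi : Integrable g) : Pminus (fun t => f t + g t) x = Pminus f x + Pminus g x := by
  have hC : Cminus (fun t => f t + g t) x = Cminus f x + Cminus g x := by
    rw [Cminus, Cminus, Cminus,
      ← (summable_cminusTerm hfb x).tsum_add (summable_cminusTerm hgb x)]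
    exact tsum_congr fun j => by simp only [cminusTerm]; ring
  rw [Pminus, Pminus, Pminus, hC,
    intervalIntegral.integral_add hfi.intervalIntegrable hgi.intervalIntegrable]
  ring

theorem Pminus_sub {M N : ℝ} (hfb : ∀ y, |f y| ≤ M) (hgb : ∀ y, |g y| ≤ N) (hfi : Integrable f)
    (hgi : Integrable g) : Pminus (fun t => f t - g t) x = Pminus f x - Pminus g x := by
  have hC : Cminus (fun t => f t - g t) x = Cminus f x - Cminus g x := by
    rw [Cminus, Cminus, Cminus,
      ← (summable_cminusTerm hfb x).tsum_sub (summable_cminusTerm hgb x)]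
    exact tsum_congr fun j => by simp only [cminusTerm]; ring
  rw [Pminus, Pminus, Pminus, hC,
    intervalIntegral.integral_sub hfi.intervalIntegrable hgi.intervalIntegrable]
  ring

theorem abs_Pminus_le {M : ℝ} (hf : ∀ y, |f y| ≤ M) :
    |Pminus f x| ≤ M + M * |x| := by
  have hI : ‖∫ t in (0 : ℝ)..x, f t‖ ≤ M * |x - 0| :=
    intervalIntegral.norm_integral_le_of_norm_le_const fun t _ => hf t
  rw [Real.norm_eq_abs, sub_zero] at hI
  exact (abs_add_le _ _).trans (add_le_add (abs_Cminus_le hf) hI)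

theorem Pminus_of_nonpos (hg : support g ⊆ Ioc 0 1) (hx : x ≤ 0) : Pminus g x = 0 := by
  rw [Pminus, Cminus_eq_zero_of_nonpos hg hx, integral_eq_zero_of_nonpos hg le_rfl hx, add_zero]

theorem Pminus_of_one_le (hg : support g ⊆ Ioc 0 1) (hx : 1 ≤ x) : Pminus g x = ∫ t, g t := by
  rw [Pminus, Cminus_eq_zero_of_one_le hg hx, integral_eq_integral_of_one_le hg hx, zero_add]

theorem Pminus_comp_two_mul (hg : support g ⊆ Ioc 0 1) (hx : 0 < x) :
    Pminus (fun t => g (2 * t)) x = Pminus g (2 * x) / 2 := by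
  rw [Pminus, Pminus, Cminus_comp_two_mul hg hx, integral_comp_two_mul, add_div]

theorem Pminus_comp_two_mul_sub_one {M : ℝ} (hg : support g ⊆ Ioc 0 1) (hgb : ∀ y, |g y| ≤ M)
    (hgi : Integrable g) (hx : 0 < x) :
    Pminus (fun t => g (2 * t - 1)) x = g (2 * x) / 2 + Pminus g (2 * x - 1) / 2 := by
  rw [Pminus, Pminus, Cminus_comp_two_mul_sub_one hg hgb hx, integral_comp_two_mul_sub_one hg hgi]
  ring

end Pminus

theorem eq_zero_of_forall_exists_eq_half {α : Type*} {s : Set α} {h : α → ℝ} {B : ℝ}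
    (hB : ∀ x ∈ s, |h x| ≤ B) (hh : ∀ x ∈ s, ∃ y ∈ s, h x = h y / 2) {x : α} (hx : x ∈ s) :
    h x = 0 := by
  have hbound : ∀ n : ℕ, ∀ x ∈ s, |h x| ≤ B * 2⁻¹ ^ n := by
    intro n
    induction n with
    | zero => simpa using hB
    | succ n ih =>
      intro x hx
      obtain ⟨y, hy, hxy⟩ := hh x hx
      rw [hxy, abs_div, abs_two, pow_succ]
      linarith [ih y hy]
  have hlim : Filter.Tendsto (fun n : ℕ => B * 2⁻¹ ^ n) Filter.atTop (nhds 0) := by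
    simpa using (tendsto_pow_atTop_nhds_zero_of_lt_one (by norm_num : (0 : ℝ) ≤ 2⁻¹)
      (by norm_num)).const_mul B
  exact abs_nonpos_iff.mp (ge_of_tendsto' hlim fun n => hbound n x hx)

def chi : ℝ → ℝ := (Ioc (0 : ℝ) 1).indicator 1

theorem support_chi : support chi ⊆ Ioc 0 1 := support_indicator_subset

theorem chi_of_mem {y : ℝ} (hy : y ∈ Ioc 0 1) : chi y = 1 := indicator_of_mem hy _

theorem abs_chi_le (y : ℝ) : |chi y| ≤ 1 := by
  by_cases h : y ∈ Ioc (0 : ℝ) 1 <;> simp [chi, h]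

theorem integrable_chi : Integrable chi :=
  (integrableOn_const measure_Ioc_lt_top.ne).integrable_indicator measurableSet_Ioc

theorem integral_chi : ∫ t, chi t = 1 := by
  simp [chi, integral_indicator_one measurableSet_Ioc]

theorem integrable_chi_comp_two_mul : Integrable fun t => chi (2 * t) :=
  integrable_chi.comp_mul_left' two_ne_zero

theorem integrable_chi_comp_two_mul_sub_one : Integrable fun t => chi (2 * t - 1) :=
  (integrable_chi.comp_sub_right 1).comp_mul_left' two_ne_zero

theorem chi_eq_add (t : ℝ) : chi t = chi (2 * t) + chi (2 * t - 1) := by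
  simp only [chi, indicator_apply, mem_Ioc, Pi.one_apply]
  split_ifs <;> grind

theorem HaarH_eq_chi_sub (t : ℝ) : HaarH t = chi (2 * t) - chi (2 * t - 1) := by
  simp only [HaarH, chi, indicator_apply, mem_Ioc, Pi.one_apply]
  split_ifs <;> grind

theorem Pminus_chi_eq_add (x : ℝ) :
    Pminus chi x = Pminus (fun t => chi (2 * t)) x + Pminus (fun t => chi (2 * t - 1)) x := by
  rw [← Pminus_add (fun y => abs_chi_le _) (fun y => abs_chi_le _) integrable_chi_comp_two_mul
    integrable_chi_comp_two_mul_sub_one, ← funext chi_eq_add]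

theorem Pminus_chi_comp_two_mul_of_half_lt {x : ℝ} (hx : 1 / 2 < x) :
    Pminus (fun t => chi (2 * t)) x = 1 / 2 := by
  rw [Pminus_comp_two_mul support_chi (by linarith),
    Pminus_of_one_le support_chi (by linarith), integral_chi]

theorem Pminus_chi_comp_two_mul_sub_one_of_le_half {x : ℝ} (h0 : 0 < x) (hx : x ≤ 1 / 2) :
    Pminus (fun t => chi (2 * t - 1)) x = 1 / 2 := by
  rw [Pminus_comp_two_mul_sub_one support_chi abs_chi_le integrable_chi h0,
    chi_of_mem ⟨by linarith, by linarith⟩, Pminus_of_nonpos support_chi (by linarith)]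
  norm_num

theorem Pminus_chi {x : ℝ} (hx : x ∈ Ioc 0 1) : Pminus chi x = 1 := by
  refine sub_eq_zero.mp (eq_zero_of_forall_exists_eq_half (h := fun y => Pminus chi y - 1)
    (B := 3) (fun y hy => ?_) (fun y hy => ?_) hx)
  · have := abs_Pminus_le abs_chi_le (x := y)
    rw [abs_of_pos hy.1] at this
    exact (abs_sub _ _).trans (by rw [abs_one]; linarith [hy.2])
  rcases le_or_gt y (1 / 2) with hy2 | hy2
  · refine ⟨2 * y, ⟨by linarith [hy.1], by linarith⟩, ?_⟩
    rw [Pminus_chi_eq_add, Pminus_comp_two_mul support_chi hy.1,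
      Pminus_chi_comp_two_mul_sub_one_of_le_half hy.1 hy2]
    ring
  · refine ⟨2 * y - 1, ⟨by linarith, by linarith [hy.2]⟩, ?_⟩
    rw [Pminus_chi_eq_add, Pminus_chi_comp_two_mul_of_half_lt hy2,
      Pminus_comp_two_mul_sub_one support_chi abs_chi_le integrable_chi hy.1,
      apply_eq_zero_of_one_lt support_chi (by linarith)]
    ring

theorem Pminus_HaarH {x : ℝ} (hx : x ∈ Ioc 0 1) : Pminus HaarH x = 0 := by
  rw [funext HaarH_eq_chi_sub, Pminus_sub (fun y => abs_chi_le _) (fun y => abs_chi_le _)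
    integrable_chi_comp_two_mul integrable_chi_comp_two_mul_sub_one]
  rcases le_or_gt x (1 / 2) with hx2 | hx2
  · rw [Pminus_comp_two_mul support_chi hx.1, Pminus_chi ⟨by linarith [hx.1], by linarith⟩,
      Pminus_chi_comp_two_mul_sub_one_of_le_half hx.1 hx2]
    norm_num
  · rw [Pminus_chi_comp_two_mul_of_half_lt hx2,
      Pminus_comp_two_mul_sub_one support_chi abs_chi_le integrable_chi hx.1,
      apply_eq_zero_of_one_lt support_chi (by linarith),
      Pminus_chi ⟨by linarith, by linarith [hx.2]⟩]
    norm_num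

theorem support_HaarH : support HaarH ⊆ Ioc 0 1 := by
  refine Function.support_subset_iff'.mpr fun y hy => ?_
  rcases not_and_or.mp hy with hy | hy <;> rw [HaarH_eq_chi_sub]
  · rw [apply_eq_zero_of_nonpos support_chi (by linarith [not_lt.mp hy]),
      apply_eq_zero_of_nonpos support_chi (by linarith [not_lt.mp hy]), sub_zero]
  · rw [apply_eq_zero_of_one_lt support_chi (by linarith [not_le.mp hy]),
      apply_eq_zero_of_one_lt support_chi (by linarith [not_le.mp hy]), sub_zero]

theorem abs_HaarH_le (y : ℝ) : |HaarH y| ≤ 1 := by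
  simp only [HaarH, indicator_apply]
  split_ifs <;> norm_num

theorem integrable_HaarH : Integrable HaarH := by
  rw [funext HaarH_eq_chi_sub]
  exact integrable_chi_comp_two_mul.sub integrable_chi_comp_two_mul_sub_one

theorem integral_HaarH : ∫ t, HaarH t = 0 := by
  rw [funext HaarH_eq_chi_sub,
    integral_sub integrable_chi_comp_two_mul integrable_chi_comp_two_mul_sub_one,
    Measure.integral_comp_mul_left chi, Measure.integral_comp_mul_left (fun u => chi (u - 1)),
    integral_sub_right_eq_self, sub_self]

theorem support_HaarNK {n k : ℕ} (hk : k < 2 ^ n) : support (HaarNK n k) ⊆ Ioc 0 1 := by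
  intro y hy
  obtain ⟨h0, h1⟩ := support_HaarH (right_ne_zero_of_mul hy)
  have hpos : (0 : ℝ) < 2 ^ n := by positivity
  have hk' : (k : ℝ) + 1 ≤ 2 ^ n := by exact_mod_cast hk
  have hk0 : (0 : ℝ) ≤ k := k.cast_nonneg
  exact ⟨pos_of_mul_pos_right (by linarith) hpos.le,
    le_of_mul_le_mul_left (by linarith : 2 ^ n * y ≤ 2 ^ n * 1) hpos⟩

theorem abs_HaarNK_le (n k : ℕ) (y : ℝ) : |HaarNK n k y| ≤ √2 ^ n := by
  rw [HaarNK, abs_mul, abs_of_nonneg (by positivity)]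
  exact mul_le_of_le_one_right (by positivity) (abs_HaarH_le _)

theorem integrable_HaarNK (n k : ℕ) : Integrable (HaarNK n k) :=
  ((integrable_HaarH.comp_sub_right (k : ℝ)).comp_mul_left' (by positivity)).const_mul _

theorem integral_HaarNK (n k : ℕ) : ∫ t, HaarNK n k t = 0 := by
  simp only [HaarNK]
  rw [integral_const_mul, Measure.integral_comp_mul_left (fun u => HaarH (u - k)),
    integral_sub_right_eq_self, integral_HaarH, smul_zero, mul_zero]

theorem HaarNK_blockEquiv_inl (n : ℕ) (k : Fin (2 ^ n)) (t : ℝ) :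
    HaarNK (n + 1) (blockEquiv n (.inl k)) t = √2 * HaarNK n k (2 * t) := by
  simp only [HaarNK, blockEquiv, Equiv.trans_apply, finSumFinEquiv_apply_left, finCongr_apply,
    Fin.val_cast, Fin.val_castAdd]
  rw [show (2 : ℝ) ^ (n + 1) * t = 2 ^ n * (2 * t) by ring, pow_succ]
  ring

theorem HaarNK_blockEquiv_inr (n : ℕ) (k : Fin (2 ^ n)) (t : ℝ) :
    HaarNK (n + 1) (blockEquiv n (.inr k)) t = √2 * HaarNK n k (2 * t - 1) := by
  simp only [HaarNK, blockEquiv, Equiv.trans_apply, finSumFinEquiv_apply_right, finCongr_apply,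
    Fin.val_cast, Fin.val_natAdd]
  rw [show (2 : ℝ) ^ (n + 1) * t - ((2 ^ n + k : ℕ) : ℝ) = 2 ^ n * (2 * t - 1) - k by
    push_cast; ring, pow_succ]
  ring

theorem Dminus_succ_blockEquiv (n : ℕ) (a b : Fin (2 ^ n) ⊕ Fin (2 ^ n)) :
    Dminus (n + 1) (blockEquiv n a) (blockEquiv n b) =
      1 / 2 * Matrix.fromBlocks (Dminus n) 1 0 (Dminus n) a b := by
  simp [Dminus]

theorem sum_Dminus_succ_inl (n : ℕ) (k : Fin (2 ^ n)) (x : ℝ) :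
    ∑ l, Dminus (n + 1) l (blockEquiv n (.inl k)) * HaarNK (n + 1) l x =
      √2 / 2 * ∑ l, Dminus n l k * HaarNK n l (2 * x) := by
  rw [← (blockEquiv n).sum_comp, Fintype.sum_sum_type, Finset.mul_sum]
  simp only [Dminus_succ_blockEquiv, HaarNK_blockEquiv_inl, Matrix.fromBlocks_apply₁₁,
    Matrix.fromBlocks_apply₂₁, Matrix.zero_apply, mul_zero, zero_mul, Finset.sum_const_zero,
    add_zero]
  exact Finset.sum_congr rfl fun l _ => by ring

theorem sum_Dminus_succ_inr (n : ℕ) (k : Fin (2 ^ n)) (x : ℝ) :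
    ∑ l, Dminus (n + 1) l (blockEquiv n (.inr k)) * HaarNK (n + 1) l x =
      √2 / 2 * (HaarNK n k (2 * x) + ∑ l, Dminus n l k * HaarNK n l (2 * x - 1)) := by
  rw [← (blockEquiv n).sum_comp, Fintype.sum_sum_type, mul_add, Finset.mul_sum]
  simp only [Dminus_succ_blockEquiv, HaarNK_blockEquiv_inl, HaarNK_blockEquiv_inr,
    Matrix.fromBlocks_apply₁₂, Matrix.fromBlocks_apply₂₂, Matrix.one_apply]
  congr 1
  · simp only [mul_ite, mul_one, mul_zero, ite_mul, zero_mul, Finset.sum_ite_eq',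
      Finset.mem_univ, if_true]
    ring
  · exact Finset.sum_congr rfl fun l _ => by ring

theorem Pminus_HaarNK (n : ℕ) (k : Fin (2 ^ n)) {x : ℝ} (hx : x ∈ Ioc 0 1) :
    Pminus (HaarNK n k) x = ∑ l, Dminus n l k * HaarNK n l x := by
  induction n generalizing x with
  | zero =>
    have hH : HaarNK 0 0 = HaarH := funext fun t => by simp [HaarNK]
    simp [Dminus, hH, Pminus_HaarH hx]
  | succ n ih =>
    obtain ⟨k | k, rfl⟩ := (blockEquiv n).surjective k
    · rw [funext (HaarNK_blockEquiv_inl n k), Pminus_const_mul,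
        Pminus_comp_two_mul (support_HaarNK k.isLt) hx.1, sum_Dminus_succ_inl]
      rcases le_or_gt x (1 / 2) with hx2 | hx2
      · rw [ih k ⟨by linarith [hx.1], by linarith⟩]
        ring
      · rw [Pminus_of_one_le (support_HaarNK k.isLt) (by linarith), integral_HaarNK,
          Finset.sum_eq_zero fun l _ => by
            rw [apply_eq_zero_of_one_lt (support_HaarNK l.isLt) (by linarith), mul_zero]]
        ring
    · rw [funext (HaarNK_blockEquiv_inr n k), Pminus_const_mul,
        Pminus_comp_two_mul_sub_one (support_HaarNK k.isLt) (abs_HaarNK_le n k)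
          (integrable_HaarNK n k) hx.1, sum_Dminus_succ_inr]
      rcases le_or_gt x (1 / 2) with hx2 | hx2
      · rw [Pminus_of_nonpos (support_HaarNK k.isLt) (by linarith),
          Finset.sum_eq_zero fun l _ => by
            rw [apply_eq_zero_of_nonpos (support_HaarNK l.isLt) (by linarith), mul_zero]]
        ring
      · rw [ih k ⟨by linarith, by linarith [hx.2]⟩,
          apply_eq_zero_of_one_lt (support_HaarNK k.isLt) (by linarith)]
        ring

/-- `P_−[H_{n,k}] = C_−[H_{n,k}] + L[H_{n,k}] = Σ_l (D_−^{(n)})_{l,k} H_{n,l}` pointwise on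
`(0,1]`: the operator `P_− = C_− + L` maps each Haar scale subspace `W_n` into itself,
with matrix `D_−^{(n)}`. -/
theorem stmt9 (n : ℕ) (k : Fin (2 ^ n)) (x : ℝ) (hx : x ∈ Set.Ioc (0 : ℝ) 1) :
    (∑' j : ℕ, (2 : ℝ) ^ (-((j : ℤ) + 1)) *
        HaarNK n k ((x + (2 : ℝ) ^ (-((j : ℤ) + 1))) * (1 - (eps (j + 1) x : ℝ)))) +
      (∫ t in (0 : ℝ)..x, HaarNK n k t) =
      ∑ l : Fin (2 ^ n), Dminus n l k * HaarNK n l x := by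
  simp only [two_zpow_neg_succ]
  exact Pminus_HaarNK n k hx
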